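/- The subgroup B := ⟨a, b, w⟩ of Aut T is isomorphic to the semidirect product (C2 × C2) ⋉ (D8 × D8), where D8 = ⟨x, y | x² = y² = (xy)⁴ = 1⟩ is the dihedral group of order 8 generated by two involutions, the first generator of C2 × C2 acts by swapping the two D8 factors, and the second generator acts by swapping the two D8 factors while simultaneously applying to each the automorphism of D8 that exchanges the generating involutions x and y. In particular B has order 256. -/

import Mathlib

universe u

namespace DicePaper

/-- Words of length `n` over the level-indexed sequence of alphabets `X`. -/
def Word (X : ℕ → Type u) : ℕ → Type u
  | 0 => PUnit
  | n + 1 => X 0 × Word (fun k => X (k + 1)) n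

/-- An automorphism of the spherically homogeneous rooted tree with alphabets `X`,
encoded by its portrait: a permutation of the children alphabet at each vertex. -/
def TreeAut (X : ℕ → Type u) : Type u :=
  ∀ n, Word X n → Equiv.Perm (X n)

namespace TreeAut

/-- The section (state) of a tree automorphism at a first-level vertex. -/
def sec {X : ℕ → Type u} (f : TreeAut X) (x : X 0) : TreeAut fun k => X (k + 1) :=
  fun n v => f (n + 1) (x, v)

/-- Action of a tree automorphism on the vertices (words). -/
def act : ∀ (X : ℕ → Type u), TreeAut X → ∀ n, Word X n → Word X n
  | _, _, 0, _ => PUnit.unit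
  | X, f, n + 1, v => (f 0 PUnit.unit v.1, act (fun k => X (k + 1)) (f.sec v.1) n v.2)

/-- The inverse action on words. -/
def invAct : ∀ (X : ℕ → Type u), TreeAut X → ∀ n, Word X n → Word X n
  | _, _, 0, _ => PUnit.unit
  | X, f, n + 1, v =>
    ((f 0 PUnit.unit)⁻¹ v.1,
      invAct (fun k => X (k + 1)) (f.sec ((f 0 PUnit.unit)⁻¹ v.1)) n v.2)

variable {X : ℕ → Type u}

instance : One (TreeAut X) := ⟨fun _ _ => 1⟩
instance : Mul (TreeAut X) := ⟨fun f g n v => f n (act X g n v) * g n v⟩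
instance : Inv (TreeAut X) := ⟨fun f n v => (f n (invAct X f n v))⁻¹⟩

theorem one_apply (n : ℕ) (v : Word X n) : (1 : TreeAut X) n v = 1 := rfl
theorem mul_apply (f g : TreeAut X) (n : ℕ) (v : Word X n) :
    (f * g) n v = f n (act X g n v) * g n v := rfl
theorem inv_apply (f : TreeAut X) (n : ℕ) (v : Word X n) :
    f⁻¹ n v = (f n (invAct X f n v))⁻¹ := rfl

theorem act_one : ∀ (n : ℕ) (X : ℕ → Type u) (v : Word X n), act X 1 n v = v
  | 0, _, _ => rfl
  | n + 1, X, v => by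
    show ((1 : Equiv.Perm (X 0)) v.1, act _ (sec 1 v.1) n v.2) = v
    have : sec (1 : TreeAut X) v.1 = 1 := rfl
    rw [this, act_one n _ v.2]
    rfl

theorem sec_mul (f g : TreeAut X) (x : X 0) :
    sec (f * g) x = sec f (g 0 PUnit.unit x) * sec g x := rfl

theorem act_mul : ∀ (n : ℕ) (X : ℕ → Type u) (f g : TreeAut X) (v : Word X n),
    act X (f * g) n v = act X f n (act X g n v)
  | 0, _, _, _, _ => rfl
  | n + 1, X, f, g, v => by
    show ((f * g) 0 PUnit.unit v.1, act _ (sec (f * g) v.1) n v.2) = _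
    rw [sec_mul, act_mul n _ (sec f (g 0 PUnit.unit v.1)) (sec g v.1) v.2]
    rfl

theorem sec_inv (f : TreeAut X) (x : X 0) :
    sec f⁻¹ x = (sec f ((f 0 PUnit.unit)⁻¹ x))⁻¹ := by
  funext n v
  rfl

theorem act_invAct : ∀ (n : ℕ) (X : ℕ → Type u) (f : TreeAut X) (v : Word X n),
    act X f n (invAct X f n v) = v
  | 0, _, _, _ => rfl
  | n + 1, X, f, v => by
    show (f 0 PUnit.unit ((f 0 PUnit.unit)⁻¹ v.1),
      act _ (sec f ((f 0 PUnit.unit)⁻¹ v.1)) n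
        (invAct _ (sec f ((f 0 PUnit.unit)⁻¹ v.1)) n v.2)) = v
    rw [act_invAct n _ _ v.2]
    simp
    rfl

theorem invAct_act : ∀ (n : ℕ) (X : ℕ → Type u) (f : TreeAut X) (v : Word X n),
    invAct X f n (act X f n v) = v
  | 0, _, _, _ => rfl
  | n + 1, X, f, v => by
    show ((f 0 PUnit.unit)⁻¹ (f 0 PUnit.unit v.1),
      invAct _ (sec f ((f 0 PUnit.unit)⁻¹ (f 0 PUnit.unit v.1))) n
        (act _ (sec f v.1) n v.2)) = v
    have h : (f 0 PUnit.unit)⁻¹ (f 0 PUnit.unit v.1) = v.1 := by simp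
    rw [h, invAct_act n _ _ v.2]
    rfl

instance : Group (TreeAut X) where
  mul_assoc f g h := by
    funext n v
    show (f n (act X g n (act X h n v)) * g n (act X h n v)) * h n v
        = f n (act X (g * h) n v) * (g n (act X h n v) * h n v)
    rw [act_mul]
    exact mul_assoc _ _ _
  one_mul f := by
    funext n v
    show (1 : TreeAut X) n (act X f n v) * f n v = f n v
    rw [one_apply, one_mul]
  mul_one f := by
    funext n v
    show f n (act X 1 n v) * (1 : TreeAut X) n v = f n v
    rw [act_one, one_apply, mul_one]
  inv_mul_cancel f := by
    funext n v
    show f⁻¹ n (act X f n v) * f n v = 1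
    rw [inv_apply, invAct_act, inv_mul_cancel]

end TreeAut



/-- The alphabet `X = {0,…,7}` identified with `(ℤ/2)³` via binary digits. -/
abbrev V : Type := ZMod 2 × ZMod 2 × ZMod 2

/-- The rooted automorphism of the regular rooted tree over `V` determined by a
permutation of the alphabet: it permutes the first letter of every word. -/
def rooted (σ : Equiv.Perm V) : TreeAut fun _ => V :=
  fun n _ => match n with
  | 0 => σ
  | _ + 1 => 1

/-- The rooted automorphism `a` (adding `1`, i.e. flipping the first binary digit). -/
def aAut : TreeAut fun _ => V := rooted (Equiv.addLeft ((1, 0, 0) : V))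

/-- The rooted automorphism `b` (adding `2`, i.e. flipping the second binary digit). -/
def bAut : TreeAut fun _ => V := rooted (Equiv.addLeft ((0, 1, 0) : V))

/-- The rooted automorphism `c` (adding `4`, i.e. flipping the third binary digit). -/
def cAut : TreeAut fun _ => V := rooted (Equiv.addLeft ((0, 0, 1) : V))

/-- The portrait of the directed automorphism `w`: its first-level sections are
`w` at `0`, `a` at `3 = (1,1,0)`, `b` at `5 = (1,0,1)`, `c` at `6 = (0,1,1)`,
and trivial elsewhere; `w` fixes the first level. -/
def wPerm : ∀ n, Word (fun _ => V) n → Equiv.Perm V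
  | 0, _ => 1
  | n + 1, v =>
    if v.1 = (0 : V) then wPerm n v.2
    else
      match n with
      | 0 =>
        if v.1 = ((1, 1, 0) : V) then Equiv.addLeft ((1, 0, 0) : V)
        else if v.1 = ((1, 0, 1) : V) then Equiv.addLeft ((0, 1, 0) : V)
        else if v.1 = ((0, 1, 1) : V) then Equiv.addLeft ((0, 0, 1) : V)
        else 1
      | _ + 1 => 1

/-- The directed automorphism `w` with `w = (w, 1, 1, a, 1, b, c, 1)`. -/
def wAut : TreeAut fun _ => V := fun n v => wPerm n v

/-- For `k ∈ X`, the unique element `h_k` of `H = ⟨a,b,c⟩` with `h_k(0) = k`,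
as a rooted automorphism of the tree. -/
def hA (k : V) : TreeAut fun _ => V := rooted (Equiv.addLeft k)

/-- The conjugates `w_k := h_k⁻¹ w h_k`, `k ∈ X`. -/
def wk (k : V) : TreeAut fun _ => V := (hA k)⁻¹ * wAut * hA k

/-- The red tetrahedron `{0, 3, 5, 6}`. -/
def red : Set V := {(0, 0, 0), (1, 1, 0), (1, 0, 1), (0, 1, 1)}

/-- The black tetrahedron `{1, 2, 4, 7}`. -/
def black : Set V := {(1, 0, 0), (0, 1, 0), (0, 0, 1), (1, 1, 1)}

end DicePaper

namespace DicePaper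

/-- The automorphism of `D₈` exchanging the two generating involutions
`x = sr 0` and `y = sr 1` (so `r j ↦ r (-j)`, `sr j ↦ sr (1 - j)`). -/
def dihSwap : DihedralGroup 4 ≃* DihedralGroup 4 where
  toFun g := match g with
    | .r j => .r (-j)
    | .sr j => .sr (1 - j)
  invFun g := match g with
    | .r j => .r (-j)
    | .sr j => .sr (1 - j)
  left_inv := by decide
  right_inv := by decide
  map_mul' := by decide

/-- The factor-swapping automorphism of `D₈ × D₈`. -/
def swapAut : MulAut (DihedralGroup 4 × DihedralGroup 4) := MulEquiv.prodComm

/-- `dihSwap` applied in both coordinates of `D₈ × D₈`. -/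
def phiAut : MulAut (DihedralGroup 4 × DihedralGroup 4) := dihSwap.prodCongr dihSwap

/-- The action of the Klein four-group on `D₈ × D₈`: the first generator swaps the
two factors, the second generator swaps the two factors and simultaneously applies
`dihSwap` (exchanging the generating involutions) in each factor. -/
def kleinActD8 : Multiplicative (ZMod 2 × ZMod 2) →* MulAut (DihedralGroup 4 × DihedralGroup 4) where
  toFun g :=
    (if g.toAdd.2 = 1 then phiAut else 1) *
    (if g.toAdd.1 + g.toAdd.2 = 1 then swapAut else 1)
  map_one' := by
    simp
  map_mul' := by
    intro g h
    refine DFunLike.ext _ _ fun x => ?_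
    revert g h x
    decide

end DicePaper

namespace DicePaper
namespace TreeAut
variable {X : ℕ → Type u}

theorem ext_iff' {f g : TreeAut X} :
    f = g ↔ f 0 PUnit.unit = g 0 PUnit.unit ∧ ∀ x, sec f x = sec g x := by
  constructor
  · rintro rfl; exact ⟨rfl, fun _ => rfl⟩
  · rintro ⟨h0, hs⟩
    funext n v
    match n, v with
    | 0, v => exact h0
    | n+1, v => exact congrFun (congrFun (hs v.1) n) v.2

def root (f : TreeAut X) : Equiv.Perm (X 0) := f 0 PUnit.unit

theorem root_mul (f g : TreeAut X) : root (f * g) = root f * root g := rfl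

theorem root_one : root (1 : TreeAut X) = 1 := rfl

theorem sec_one (x : X 0) : sec (1 : TreeAut X) x = 1 := rfl

theorem sec_mul' (f g : TreeAut X) (x : X 0) (hg : root g = 1) :
    sec (f * g) x = sec f x * sec g x := by
  rw [sec_mul]; congr 1; rw [show g 0 PUnit.unit = root g from rfl, hg]; rfl

end TreeAut
end DicePaper
namespace DicePaper
open TreeAut

theorem rooted_mul (σ τ : Equiv.Perm V) : rooted σ * rooted τ = rooted (σ * τ) := by
  funext n v
  match n with
  | 0 => rfl
  | n+1 => show (1 : Equiv.Perm V) * 1 = 1; simp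

theorem rooted_one : rooted 1 = (1 : TreeAut fun _ => V) := by
  funext n v; match n with | 0 => rfl | n+1 => rfl

theorem root_rooted (σ : Equiv.Perm V) : root (rooted σ) = σ := rfl

theorem sec_rooted (σ : Equiv.Perm V) (x : V) : sec (rooted σ) x = 1 := rfl

theorem hA_mul (j k : V) : hA j * hA k = hA (j + k) := by
  rw [hA, hA, hA, rooted_mul]
  exact congrArg rooted (Equiv.ext fun v => (add_assoc j k v).symm)

theorem hA_sq (k : V) : hA k * hA k = 1 := by
  rw [hA_mul]
  have : k + k = 0 := by
    rcases k with ⟨k1, k2, k3⟩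
    have h : ∀ u : ZMod 2, u + u = 0 := by decide
    simp [Prod.ext_iff, h]
  rw [this, hA, show Equiv.addLeft (0:V) = 1 from Equiv.ext fun v => zero_add v, rooted_one]

theorem hA_inv (k : V) : (hA k)⁻¹ = hA k :=
  inv_eq_of_mul_eq_one_right (hA_sq k)

theorem aAut_eq : aAut = hA (1,0,0) := rfl
theorem bAut_eq : bAut = hA (0,1,0) := rfl

theorem root_wAut : root wAut = 1 := rfl

theorem wPerm_succ (n : ℕ) (x : V) (v : Word (fun _ => V) n) :
    wPerm (n+1) (x, v) = if x = 0 then wPerm n v else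
      (match n with
      | 0 =>
        if x = ((1, 1, 0) : V) then Equiv.addLeft ((1, 0, 0) : V)
        else if x = ((1, 0, 1) : V) then Equiv.addLeft ((0, 1, 0) : V)
        else if x = ((0, 1, 1) : V) then Equiv.addLeft ((0, 0, 1) : V)
        else 1
      | _ + 1 => 1) := by cases n <;> rfl

theorem sec_wAut (x : V) : sec wAut x =
    if x = 0 then wAut else
    if x = (1,1,0) then aAut else
    if x = (1,0,1) then bAut else
    if x = (0,1,1) then cAut else 1 := by
  funext n v
  show wPerm (n+1) (x, v) = _
  rw [wPerm_succ]
  by_cases h0 : x = 0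
  · simp only [h0, if_pos rfl, if_true]; rfl
  simp only [h0, if_false]
  by_cases h3 : x = (1,1,0)
  · simp only [h3, if_pos rfl, if_true]
    match n with
    | 0 => rfl
    | n+1 => rfl
  simp only [h3, if_false]
  by_cases h5 : x = (1,0,1)
  · simp only [h5, if_pos rfl, if_true]
    match n with
    | 0 => rfl
    | n+1 => rfl
  simp only [h5, if_false]
  by_cases h6 : x = (0,1,1)
  · simp only [h6, if_pos rfl, if_true]
    match n with
    | 0 => rfl
    | n+1 => rfl
  · simp only [h6, if_false]
    match n with
    | 0 => rfl
    | n+1 => rfl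

end DicePaper
namespace DicePaper
open TreeAut

/-- conjugate of `w` by the rooted automorphism `hA k`. -/
def conjW (k : V) : TreeAut fun _ => V := hA k * wAut * hA k

theorem sec_hA (k : V) (x : V) : sec (hA k) x = 1 := sec_rooted _ _

theorem root_conjW (k : V) : root (conjW k) = 1 := by
  have h : root (hA k) * root (hA k) = 1 := by rw [← root_mul, hA_sq, root_one]
  rw [conjW, root_mul, root_mul, root_wAut, mul_one, h]

theorem sec_conjW (k x : V) : sec (conjW k) x = sec wAut (k + x) := by
  rw [conjW, sec_mul, sec_mul, sec_hA, sec_hA, one_mul, mul_one]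
  have h : (hA k) 0 PUnit.unit x = k + x := rfl
  rw [h]

theorem eq_one_of_sections {f : TreeAut fun _ => V} (h0 : root f = 1)
    (h : ∀ x, sec f x = 1) : f = 1 :=
  ext_iff'.2 ⟨h0, fun x => by rw [h, sec_one]⟩

theorem wPerm_sq : ∀ (n : ℕ) (v : Word (fun _ => V) n), wPerm n v * wPerm n v = 1
  | 0, _ => one_mul 1
  | n+1, v => by
    obtain ⟨x, u⟩ := v
    rw [wPerm_succ]
    by_cases h0 : x = 0
    · rw [if_pos h0]; exact wPerm_sq n u
    · rw [if_neg h0]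
      match n with
      | 0 =>
        by_cases h3 : x = (1,1,0)
        · rw [if_pos h3]
          show Equiv.addLeft ((1,0,0):V) * Equiv.addLeft ((1,0,0):V) = 1
          decide
        by_cases h5 : x = (1,0,1)
        · rw [if_neg h3, if_pos h5]
          show Equiv.addLeft ((0,1,0):V) * Equiv.addLeft ((0,1,0):V) = 1
          decide
        by_cases h6 : x = (0,1,1)
        · rw [if_neg h3, if_neg h5, if_pos h6]
          show Equiv.addLeft ((0,0,1):V) * Equiv.addLeft ((0,0,1):V) = 1
          decide
        · rw [if_neg h3, if_neg h5, if_neg h6]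
          show (1 : Equiv.Perm V) * 1 = 1
          exact one_mul 1
      | n+1 => exact one_mul 1

theorem wPerm_act : ∀ (n : ℕ) (v : Word (fun _ => V) n),
    wPerm n (act (fun _ => V) wAut n v) = wPerm n v
  | 0, _ => rfl
  | n+1, v => by
    obtain ⟨x, u⟩ := v
    show wPerm (n+1) ((wPerm 0 PUnit.unit) x, act _ (sec wAut x) n u) = wPerm (n+1) (x, u)
    rw [show (wPerm 0 PUnit.unit) x = x from rfl]
    rw [wPerm_succ, wPerm_succ]
    by_cases h0 : x = 0
    · rw [if_pos h0, if_pos h0]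
      have hs : sec wAut x = wAut := by rw [sec_wAut, if_pos h0]
      rw [hs]
      exact wPerm_act n u
    · rw [if_neg h0, if_neg h0]
      match n with
      | 0 => rfl
      | n+1 => rfl

theorem wAut_sq : wAut * wAut = 1 := by
  funext n v
  rw [mul_apply]
  show wPerm n (act _ wAut n v) * wPerm n v = (1 : Equiv.Perm V)
  rw [wPerm_act]
  exact wPerm_sq n v

theorem aAut_sq : aAut * aAut = 1 := hA_sq _
theorem bAut_sq : bAut * bAut = 1 := hA_sq _
theorem cAut_sq : cAut * cAut = 1 := hA_sq _

theorem zmod2_cases : ∀ u : ZMod 2, u = 0 ∨ u = 1 := by decide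

/-- parity of a vertex: 0 on the red tetrahedron, 1 on the black one -/
def par (x : V) : ZMod 2 := x.1 + x.2.1 + x.2.2

theorem par_add (j x : V) : par (j + x) = par j + par x := by
  obtain ⟨j1, j2, j3⟩ := j
  obtain ⟨x1, x2, x3⟩ := x
  show (j1 + x1) + (j2 + x2) + (j3 + x3) = (j1 + j2 + j3) + (x1 + x2 + x3)
  ring

theorem sec_wAut_black (x : V) (h : par x = 1) : sec wAut x = 1 := by
  rw [sec_wAut, if_neg (fun hx => by subst hx; exact absurd h (by decide)),
    if_neg (fun hx => by subst hx; exact absurd h (by decide)),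
    if_neg (fun hx => by subst hx; exact absurd h (by decide)),
    if_neg (fun hx => by subst hx; exact absurd h (by decide))]

theorem w_comm_conjW (k : V) (hk : par k = 1) :
    wAut * conjW k = conjW k * wAut := by
  refine ext_iff'.2 ⟨?_, fun x => ?_⟩
  · show root _ = root _
    simp [root_mul, root_wAut, root_conjW]
  · rw [sec_mul' _ _ _ (root_conjW _), sec_mul' _ _ _ root_wAut, sec_conjW]
    rcases zmod2_cases (par x) with h | h
    · have h2 : par (k + x) = 1 := by rw [par_add, hk, h, add_zero]
      rw [sec_wAut_black _ h2, mul_one, one_mul]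
    · rw [sec_wAut_black _ h, one_mul, mul_one]

end DicePaper
namespace DicePaper
open TreeAut

theorem cAut_eq : cAut = hA (0,0,1) := rfl

theorem sw0 : sec wAut (0 : V) = wAut := by rw [sec_wAut, if_pos rfl]
theorem sw3 : sec wAut ((1,1,0) : V) = aAut := by
  rw [sec_wAut, if_neg (by decide), if_pos rfl]
theorem sw5 : sec wAut ((1,0,1) : V) = bAut := by
  rw [sec_wAut, if_neg (by decide), if_neg (by decide), if_pos rfl]
theorem sw6 : sec wAut ((0,1,1) : V) = cAut := by
  rw [sec_wAut, if_neg (by decide), if_neg (by decide), if_neg (by decide), if_pos rfl]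

theorem sec_w_sq (x : V) : sec wAut x * sec wAut x = 1 := by
  rw [← sec_mul' _ _ _ root_wAut, wAut_sq, sec_one]

theorem wa_sq : (wAut * aAut) * (wAut * aAut) = wAut * conjW (1,0,0) := by
  rw [conjW, ← aAut_eq]
  simp only [mul_assoc]

theorem root_w_conjW (k : V) : root (wAut * conjW k) = 1 := by
  rw [root_mul, root_wAut, root_conjW, one_mul]

theorem wc1_sq : (wAut * conjW (1,0,0)) * (wAut * conjW (1,0,0)) = 1 := by
  refine eq_one_of_sections ?_ fun x => ?_
  · simp [root_mul, root_wAut, root_conjW]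
  · rw [sec_mul' _ _ _ (root_w_conjW _), sec_mul' _ _ _ (root_conjW _), sec_conjW]
    rcases zmod2_cases (par x) with h | h
    · have h2 : par ((1,0,0) + x) = 1 := by rw [par_add, h]; decide
      rw [sec_wAut_black _ h2, mul_one]
      exact sec_w_sq x
    · rw [sec_wAut_black _ h, one_mul]
      exact sec_w_sq _

theorem conj_pow4 {u t : TreeAut fun _ => V} (hu : u * u = 1)
    (h : ((t*u)*(t*u))*((t*u)*(t*u)) = 1) : ((u*t)*(u*t))*((u*t)*(u*t)) = 1 := by
  have hu' : ∀ s : TreeAut fun _ => V, u * (u * s) = s := fun s => by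
    rw [← mul_assoc, hu, one_mul]
  have key : ((u*t)*(u*t))*((u*t)*(u*t)) = u * ((((t*u)*(t*u))*((t*u)*(t*u))) * u) := by
    simp only [mul_assoc, hu, mul_one]
  rw [key, h, one_mul, hu]

theorem wa4 : ((wAut * aAut) * (wAut * aAut)) * ((wAut * aAut) * (wAut * aAut)) = 1 := by
  rw [wa_sq]; exact wc1_sq

theorem z4 : ((wAut * conjW (1,1,0)) * (wAut * conjW (1,1,0))) *
    ((wAut * conjW (1,1,0)) * (wAut * conjW (1,1,0))) = 1 := by
  have h1 : root ((wAut * conjW (1,1,0)) * (wAut * conjW (1,1,0))) = 1 := by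
    simp [root_mul, root_wAut, root_conjW]
  refine eq_one_of_sections ?_ fun x => ?_
  · simp [root_mul, root_wAut, root_conjW]
  · have hS : sec (wAut * conjW (1,1,0)) x = sec wAut x * sec wAut ((1,1,0) + x) := by
      rw [sec_mul' _ _ _ (root_conjW _), sec_conjW]
    rw [sec_mul' _ _ _ h1, sec_mul' _ _ _ (root_w_conjW _), hS]
    rcases zmod2_cases (par x) with h | h
    · have hx : x = ((0,0,0) : V) ∨ x = (1,1,0) ∨ x = (1,0,1) ∨ x = (0,1,1) := by
        obtain ⟨x1, x2, x3⟩ := x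
        rcases zmod2_cases x1 with rfl|rfl <;> rcases zmod2_cases x2 with rfl|rfl <;>
          rcases zmod2_cases x3 with rfl|rfl <;> revert h <;> decide
      rcases hx with rfl | rfl | rfl | rfl
      · rw [show ((1,1,0) : V) + (0,0,0) = ((1,1,0) : V) from by decide,
          show ((0,0,0) : V) = (0 : V) from rfl, sw0, sw3]
        exact wa4
      · rw [show ((1,1,0) : V) + (1,1,0) = (0 : V) from by decide, sw0, sw3]
        exact conj_pow4 aAut_sq wa4
      · rw [show ((1,1,0) : V) + (1,0,1) = ((0,1,1) : V) from by decide, sw5, sw6]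
        have hbc : bAut * cAut = hA (0,1,1) := by
          rw [bAut_eq, cAut_eq, hA_mul, show ((0,1,0):V) + (0,0,1) = ((0,1,1):V) from by decide]
        rw [hbc, hA_sq]
        simp
      · rw [show ((1,1,0) : V) + (0,1,1) = ((1,0,1) : V) from by decide, sw6, sw5]
        have hcb : cAut * bAut = hA (0,1,1) := by
          rw [bAut_eq, cAut_eq, hA_mul, show ((0,0,1):V) + (0,1,0) = ((0,1,1):V) from by decide]
        rw [hcb, hA_sq]
        simp
    · have h2 : par ((1,1,0) + x) = 1 := by rw [par_add, h]; decide
      rw [sec_wAut_black _ h, sec_wAut_black _ h2, one_mul, one_mul]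
      simp

end DicePaper
namespace DicePaper

section DihedralLift

variable {H : Type*} [Group H]

theorem zpow_eq_of_zmod4 {z : H} (h4 : z ^ (4:ℕ) = 1) {m n : ℤ}
    (h : (m : ZMod 4) = (n : ZMod 4)) : z ^ m = z ^ n := by
  rw [zpow_eq_zpow_iff_modEq]
  have hd : orderOf z ∣ 4 := orderOf_dvd_of_pow_eq_one h4
  exact Int.ModEq.of_dvd (Int.natCast_dvd_natCast.2 hd) ((ZMod.intCast_eq_intCast_iff m n 4).1 h)

theorem zmod4_val_cast : ∀ u : ZMod 4, (((u.val : ℤ)) : ZMod 4) = u := by decide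

/-- The hom `D₈ →* H` sending the generating involutions `sr 0, sr 1` to `x, y`. -/
def dihedralLift (x y : H) (hx : x * x = 1) (hy : y * y = 1)
    (h4 : (x * y) ^ (4:ℕ) = 1) : DihedralGroup 4 →* H := by
  refine
    { toFun := fun g => match g with
        | .r j => (x*y) ^ (j.val : ℤ)
        | .sr j => x * (x*y) ^ (j.val : ℤ)
      map_one' := ?_
      map_mul' := ?_ }
  · show (x*y) ^ (((0 : ZMod 4).val : ℤ)) = 1
    norm_num
  · have hxi : x⁻¹ = x := inv_eq_of_mul_eq_one_right hx
    have hyi : y⁻¹ = y := inv_eq_of_mul_eq_one_right hy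
    have hconj : ∀ m : ℤ, x * (x*y) ^ m * x⁻¹ = (x*y) ^ (-m) := by
      intro m
      have h1 : (MulAut.conj x) ((x*y) ^ m) = ((MulAut.conj x) (x*y)) ^ m := map_zpow _ _ _
      have h2 : (MulAut.conj x) (x*y) = (x*y)⁻¹ := by
        rw [MulAut.conj_apply, hxi, mul_inv_rev, hxi, hyi]
        have hh : x * (x * y) * x = x * x * (y * x) := by simp [mul_assoc]
        rw [hh, hx, one_mul]
      rw [MulAut.conj_apply] at h1
      rw [h1, h2, inv_zpow, ← zpow_neg]
    have key : ∀ m : ℤ, (x*y) ^ m * x = x * (x*y) ^ (-m) := by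
      intro m
      have h5 := congrArg (· * x) (hconj (-m))
      simp only [neg_neg, inv_mul_cancel_right, hxi] at h5
      rw [mul_assoc, hx, mul_one] at h5
      exact h5.symm
    intro g h
    match g, h with
    | .r i, .r j =>
      show (x*y) ^ (((i+j).val : ℤ)) = (x*y) ^ ((i.val : ℤ)) * (x*y) ^ ((j.val : ℤ))
      rw [← zpow_add]
      refine zpow_eq_of_zmod4 h4 ?_
      rw [Int.cast_add, zmod4_val_cast, zmod4_val_cast, zmod4_val_cast]
    | .r i, .sr j =>
      show x * (x*y) ^ (((j-i).val : ℤ)) = (x*y) ^ ((i.val : ℤ)) * (x * (x*y) ^ ((j.val : ℤ)))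
      rw [← mul_assoc, key, mul_assoc, ← zpow_add]
      congr 1
      refine zpow_eq_of_zmod4 h4 ?_
      rw [Int.cast_add, Int.cast_neg, zmod4_val_cast, zmod4_val_cast, zmod4_val_cast]
      ring
    | .sr i, .r j =>
      show x * (x*y) ^ (((i+j).val : ℤ)) = (x * (x*y) ^ ((i.val : ℤ))) * (x*y) ^ ((j.val : ℤ))
      rw [mul_assoc, ← zpow_add]
      congr 1
      refine zpow_eq_of_zmod4 h4 ?_
      rw [Int.cast_add, zmod4_val_cast, zmod4_val_cast, zmod4_val_cast]
    | .sr i, .sr j =>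
      show (x*y) ^ (((j-i).val : ℤ)) = (x * (x*y) ^ ((i.val : ℤ))) * (x * (x*y) ^ ((j.val : ℤ)))
      rw [mul_assoc, ← mul_assoc ((x*y) ^ ((i.val : ℤ))), key, mul_assoc, ← zpow_add,
        ← mul_assoc, hx, one_mul]
      refine zpow_eq_of_zmod4 h4 ?_
      rw [Int.cast_add, Int.cast_neg, zmod4_val_cast, zmod4_val_cast, zmod4_val_cast]
      ring

@[simp] theorem dihedralLift_sr0 (x y : H) (hx : x * x = 1) (hy : y * y = 1)
    (h4 : (x * y) ^ (4:ℕ) = 1) : dihedralLift x y hx hy h4 (.sr 0) = x := by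
  show x * (x*y) ^ (((0 : ZMod 4).val : ℤ)) = x
  norm_num

@[simp] theorem dihedralLift_sr1 (x y : H) (hx : x * x = 1) (hy : y * y = 1)
    (h4 : (x * y) ^ (4:ℕ) = 1) : dihedralLift x y hx hy h4 (.sr 1) = y := by
  show x * (x*y) ^ (((1 : ZMod 4).val : ℤ)) = y
  rw [show (((1 : ZMod 4).val : ℤ)) = 1 from by decide, zpow_one, ← mul_assoc, hx, one_mul]

theorem dihedral_genset : ∀ g : DihedralGroup 4,
    g ∈ Subgroup.closure ({.sr 0, .sr 1} : Set (DihedralGroup 4)) := by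
  have h0 : (DihedralGroup.sr 0 : DihedralGroup 4) ∈
      Subgroup.closure ({.sr 0, .sr 1} : Set (DihedralGroup 4)) :=
    Subgroup.subset_closure (Set.mem_insert _ _)
  have h1 : (DihedralGroup.sr 1 : DihedralGroup 4) ∈
      Subgroup.closure ({.sr 0, .sr 1} : Set (DihedralGroup 4)) :=
    Subgroup.subset_closure (Set.mem_insert_of_mem _ rfl)
  have hr : ∀ j : ZMod 4, (DihedralGroup.r j : DihedralGroup 4) ∈
      Subgroup.closure ({.sr 0, .sr 1} : Set (DihedralGroup 4)) := by
    intro j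
    have : (DihedralGroup.r j : DihedralGroup 4) = (DihedralGroup.sr 0 * DihedralGroup.sr 1) ^ (j.val) := by
      revert j; decide
    rw [this]
    exact pow_mem (mul_mem h0 h1) _
  intro g
  match g with
  | .r j => exact hr j
  | .sr j =>
    have : (DihedralGroup.sr j : DihedralGroup 4) = DihedralGroup.sr 0 * DihedralGroup.r j := by
      rw [DihedralGroup.sr_mul_r, zero_add]
    rw [this]
    exact mul_mem h0 (hr j)

theorem dihedral_closure_top :
    Subgroup.closure ({.sr 0, .sr 1} : Set (DihedralGroup 4)) = ⊤ :=
  top_le_iff.1 fun g _ => dihedral_genset g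

end DihedralLift
end DicePaper
namespace DicePaper
open TreeAut

theorem hA_zero : hA 0 = 1 := by
  rw [hA, show Equiv.addLeft (0:V) = 1 from Equiv.ext fun v => zero_add v, rooted_one]

theorem conjW_zero : conjW 0 = wAut := by
  rw [conjW, hA_zero, one_mul, mul_one]

theorem conjW_sq (k : V) : conjW k * conjW k = 1 := by
  rw [conjW]
  have e1 : (hA k * wAut * hA k) * (hA k * wAut * hA k)
      = hA k * (wAut * ((hA k * hA k) * (wAut * hA k))) := by simp [mul_assoc]
  rw [e1, hA_sq, one_mul, ← mul_assoc wAut wAut, wAut_sq, one_mul, hA_sq]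

theorem hA_conj (j k : V) : hA j * conjW k * (hA j)⁻¹ = conjW (j + k) := by
  rw [hA_inv]
  have e1 : hA j * conjW k * hA j = (hA j * hA k) * wAut * (hA k * hA j) := by
    rw [conjW]; group
  rw [e1, hA_mul, hA_mul, add_comm k j, conjW]

theorem conjW_comm (j k : V) (hjk : par j + par k = 1) :
    conjW j * conjW k = conjW k * conjW j := by
  refine ext_iff'.2 ⟨by show root _ = root _; simp [root_mul, root_conjW], fun x => ?_⟩
  rw [sec_mul' _ _ _ (root_conjW _), sec_mul' _ _ _ (root_conjW _), sec_conjW, sec_conjW]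
  have hx2 : ∀ u : ZMod 2, u + u = 0 := by decide
  rcases zmod2_cases (par (j + x)) with h | h
  · have h2 : par (k + x) = 1 := by
      rw [par_add, show par x = par j + par (j+x) from by
          rw [par_add, ← add_assoc, hx2, zero_add],
        h, add_zero, add_comm, hjk]
    rw [sec_wAut_black _ h2, mul_one, one_mul]
  · rw [sec_wAut_black _ h, one_mul, mul_one]

theorem z4' : (wAut * conjW (1,1,0)) ^ (4:ℕ) = 1 := by
  have e : (wAut * conjW (1,1,0)) ^ (4:ℕ)
      = ((wAut * conjW (1,1,0)) * (wAut * conjW (1,1,0))) *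
        ((wAut * conjW (1,1,0)) * (wAut * conjW (1,1,0))) := by
    rw [show (4:ℕ) = 2+2 from rfl, pow_add, pow_two]
  rw [e, z4]

/-- The red dihedral group `⟨w, w^{ab}⟩` as a hom `D₈ →* Aut T`. -/
def Fred : DihedralGroup 4 →* TreeAut fun _ => V :=
  dihedralLift wAut (conjW (1,1,0)) wAut_sq (conjW_sq _) z4'

/-- The black dihedral group, the conjugate of the red one by `a`. -/
def Fblack : DihedralGroup 4 →* TreeAut fun _ => V :=
  ((MulAut.conj aAut).toMonoidHom).comp Fred

theorem dih_hom_ext {H : Type*} [Group H] {f g : DihedralGroup 4 →* H}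
    (h0 : f (.sr 0) = g (.sr 0)) (h1 : f (.sr 1) = g (.sr 1)) : f = g := by
  have hEq : Set.EqOn f g ({.sr 0, .sr 1} : Set (DihedralGroup 4)) := by
    rintro y (rfl | rfl)
    · exact h0
    · exact h1
  refine MonoidHom.ext fun x => MonoidHom.eqOn_closure hEq ?_
  simp [dihedral_closure_top]

theorem Fred_sr0 : Fred (.sr 0) = wAut := dihedralLift_sr0 _ _ _ _ _
theorem Fred_sr1 : Fred (.sr 1) = conjW (1,1,0) := dihedralLift_sr1 _ _ _ _ _

theorem Fblack_sr0 : Fblack (.sr 0) = conjW (1,0,0) := by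
  show aAut * Fred (.sr 0) * aAut⁻¹ = _
  rw [Fred_sr0, aAut_eq, ← conjW_zero, hA_conj, add_zero]

theorem Fblack_sr1 : Fblack (.sr 1) = conjW (0,1,0) := by
  show aAut * Fred (.sr 1) * aAut⁻¹ = _
  rw [Fred_sr1, aAut_eq, hA_conj, show ((1,0,0) : V) + (1,1,0) = ((0,1,0):V) from by decide]

theorem comm_of_gens {F : DihedralGroup 4 →* TreeAut fun _ => V} {g0 g1 t : TreeAut fun _ => V}
    (hF0 : F (.sr 0) = g0) (hF1 : F (.sr 1) = g1)
    (hw : Commute g0 t) (h3 : Commute g1 t) (m : DihedralGroup 4) : Commute (F m) t := by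
  have he : ((MulAut.conj t).toMonoidHom).comp F = F := by
    refine dih_hom_ext ?_ ?_ <;>
      simp only [MonoidHom.comp_apply, MulEquiv.coe_toMonoidHom, MulAut.conj_apply, hF0, hF1]
    · rw [← hw.eq]; group
    · rw [← h3.eq]; group
  have hm := congrArg (fun f => f m) he
  simp only [MonoidHom.comp_apply, MulEquiv.coe_toMonoidHom, MulAut.conj_apply] at hm
  have h2 : t * F m = F m * t := by
    calc t * F m = (t * F m * t⁻¹) * t := by group
    _ = F m * t := by rw [hm]
  exact h2.symm

theorem red_black_commute (m n : DihedralGroup 4) : Commute (Fred m) (Fblack n) := by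
  have c00 : Commute wAut (conjW (1,0,0)) := by
    have := conjW_comm 0 (1,0,0) (by decide)
    rw [conjW_zero] at this
    exact this
  have c01 : Commute wAut (conjW (0,1,0)) := by
    have := conjW_comm 0 (0,1,0) (by decide)
    rw [conjW_zero] at this
    exact this
  have c30 : Commute (conjW (1,1,0)) (conjW (1,0,0)) := conjW_comm _ _ (by decide)
  have c31 : Commute (conjW (1,1,0)) (conjW (0,1,0)) := conjW_comm _ _ (by decide)
  have k0 : Commute (Fred m) (conjW (1,0,0)) := comm_of_gens Fred_sr0 Fred_sr1 c00 c30 m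
  have k1 : Commute (Fred m) (conjW (0,1,0)) := comm_of_gens Fred_sr0 Fred_sr1 c01 c31 m
  exact (comm_of_gens Fblack_sr0 Fblack_sr1 k0.symm k1.symm n).symm

end DicePaper
namespace DicePaper
open TreeAut

/-- The homomorphism `D₈ × D₈ →* Aut T` with image `⟨w, w^{ab}⟩ × ⟨w^a, w^b⟩`. -/
def fN : DihedralGroup 4 × DihedralGroup 4 →* TreeAut fun _ => V :=
  MonoidHom.noncommCoprod Fred Fblack red_black_commute

/-- The homomorphism `C2 × C2 →* Aut T` sending the generators to `a` and `b`. -/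
def fK : Multiplicative (ZMod 2 × ZMod 2) →* TreeAut fun _ => V where
  toFun g := hA (g.toAdd.1, g.toAdd.2, 0)
  map_one' := hA_zero
  map_mul' g h := by
    show hA ((Multiplicative.toAdd (g*h)).1, (Multiplicative.toAdd (g*h)).2, 0)
      = hA ((Multiplicative.toAdd g).1, (Multiplicative.toAdd g).2, 0) *
        hA ((Multiplicative.toAdd h).1, (Multiplicative.toAdd h).2, 0)
    rw [hA_mul]
    rfl

theorem fK_a : fK (Multiplicative.ofAdd ((1 : ZMod 2), (0 : ZMod 2))) = hA (1,0,0) := rfl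
theorem fK_b : fK (Multiplicative.ofAdd ((0 : ZMod 2), (1 : ZMod 2))) = hA (0,1,0) := rfl

theorem prodD8_hom_ext {H : Type*} [Group H]
    {f g : DihedralGroup 4 × DihedralGroup 4 →* H}
    (h00 : f (.sr 0, 1) = g (.sr 0, 1)) (h01 : f (.sr 1, 1) = g (.sr 1, 1))
    (h10 : f (1, .sr 0) = g (1, .sr 0)) (h11 : f (1, .sr 1) = g (1, .sr 1)) : f = g := by
  have e1 : f.comp (MonoidHom.inl _ _) = g.comp (MonoidHom.inl _ _) := dih_hom_ext h00 h01
  have e2 : f.comp (MonoidHom.inr _ _) = g.comp (MonoidHom.inr _ _) := dih_hom_ext h10 h11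
  refine MonoidHom.ext fun x => ?_
  have hx : x = (x.1, 1) * (1, x.2) := by
    rw [Prod.mk_mul_mk, mul_one, one_mul]
  rw [hx, map_mul, map_mul,
    show f (x.1, 1) = f.comp (MonoidHom.inl _ _) x.1 from rfl, e1,
    show f (1, x.2) = f.comp (MonoidHom.inr _ _) x.2 from rfl, e2]
  rfl

theorem fN_apply (m n : DihedralGroup 4) : fN (m, n) = Fred m * Fblack n :=
  MonoidHom.noncommCoprod_apply _ _ _ _

theorem conjW_eq_conj (j k : V) : conjW (j + k) = hA j * conjW k * (hA j)⁻¹ :=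
  (hA_conj j k).symm

theorem hcompat : ∀ g : Multiplicative (ZMod 2 × ZMod 2),
    fN.comp (MulEquiv.toMonoidHom (kleinActD8 g)) =
      (MulEquiv.toMonoidHom (MulAut.conj (fK g))).comp fN := by
  intro g
  have hg : g = Multiplicative.ofAdd (g.toAdd.1, g.toAdd.2) := rfl
  rcases zmod2_cases g.toAdd.1 with h1 | h1 <;> rcases zmod2_cases g.toAdd.2 with h2 | h2 <;>
    rw [hg, h1, h2] <;>
    refine prodD8_hom_ext ?_ ?_ ?_ ?_ <;>
    simp only [MonoidHom.comp_apply, MulEquiv.coe_toMonoidHom, MulAut.conj_apply]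
  -- 16 goals
  · rw [show (kleinActD8 (Multiplicative.ofAdd ((0:ZMod 2),(0:ZMod 2)))) ((DihedralGroup.sr 0 : DihedralGroup 4), (1 : DihedralGroup 4)) = ((DihedralGroup.sr 0 : DihedralGroup 4), (1 : DihedralGroup 4)) from by decide]
    simp only [fN_apply, map_one, one_mul, mul_one, Fred_sr0, Fred_sr1, Fblack_sr0, Fblack_sr1,
      ← conjW_zero]
    rw [show fK (Multiplicative.ofAdd ((0:ZMod 2),(0:ZMod 2))) = hA ((0:ZMod 2),(0:ZMod 2),(0:ZMod 2)) from rfl, hA_conj]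
    congr 1 <;> decide
  · rw [show (kleinActD8 (Multiplicative.ofAdd ((0:ZMod 2),(0:ZMod 2)))) ((DihedralGroup.sr 1 : DihedralGroup 4), (1 : DihedralGroup 4)) = ((DihedralGroup.sr 1 : DihedralGroup 4), (1 : DihedralGroup 4)) from by decide]
    simp only [fN_apply, map_one, one_mul, mul_one, Fred_sr0, Fred_sr1, Fblack_sr0, Fblack_sr1,
      ← conjW_zero]
    rw [show fK (Multiplicative.ofAdd ((0:ZMod 2),(0:ZMod 2))) = hA ((0:ZMod 2),(0:ZMod 2),(0:ZMod 2)) from rfl, hA_conj]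
    congr 1 <;> decide
  · rw [show (kleinActD8 (Multiplicative.ofAdd ((0:ZMod 2),(0:ZMod 2)))) ((1 : DihedralGroup 4), (DihedralGroup.sr 0 : DihedralGroup 4)) = ((1 : DihedralGroup 4), (DihedralGroup.sr 0 : DihedralGroup 4)) from by decide]
    simp only [fN_apply, map_one, one_mul, mul_one, Fred_sr0, Fred_sr1, Fblack_sr0, Fblack_sr1,
      ← conjW_zero]
    rw [show fK (Multiplicative.ofAdd ((0:ZMod 2),(0:ZMod 2))) = hA ((0:ZMod 2),(0:ZMod 2),(0:ZMod 2)) from rfl, hA_conj]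
    congr 1 <;> decide
  · rw [show (kleinActD8 (Multiplicative.ofAdd ((0:ZMod 2),(0:ZMod 2)))) ((1 : DihedralGroup 4), (DihedralGroup.sr 1 : DihedralGroup 4)) = ((1 : DihedralGroup 4), (DihedralGroup.sr 1 : DihedralGroup 4)) from by decide]
    simp only [fN_apply, map_one, one_mul, mul_one, Fred_sr0, Fred_sr1, Fblack_sr0, Fblack_sr1,
      ← conjW_zero]
    rw [show fK (Multiplicative.ofAdd ((0:ZMod 2),(0:ZMod 2))) = hA ((0:ZMod 2),(0:ZMod 2),(0:ZMod 2)) from rfl, hA_conj]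
    congr 1 <;> decide
  · rw [show (kleinActD8 (Multiplicative.ofAdd ((0:ZMod 2),(1:ZMod 2)))) ((DihedralGroup.sr 0 : DihedralGroup 4), (1 : DihedralGroup 4)) = ((1 : DihedralGroup 4), (DihedralGroup.sr 1 : DihedralGroup 4)) from by decide]
    simp only [fN_apply, map_one, one_mul, mul_one, Fred_sr0, Fred_sr1, Fblack_sr0, Fblack_sr1,
      ← conjW_zero]
    rw [show fK (Multiplicative.ofAdd ((0:ZMod 2),(1:ZMod 2))) = hA ((0:ZMod 2),(1:ZMod 2),(0:ZMod 2)) from rfl, hA_conj]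
    congr 1 <;> decide
  · rw [show (kleinActD8 (Multiplicative.ofAdd ((0:ZMod 2),(1:ZMod 2)))) ((DihedralGroup.sr 1 : DihedralGroup 4), (1 : DihedralGroup 4)) = ((1 : DihedralGroup 4), (DihedralGroup.sr 0 : DihedralGroup 4)) from by decide]
    simp only [fN_apply, map_one, one_mul, mul_one, Fred_sr0, Fred_sr1, Fblack_sr0, Fblack_sr1,
      ← conjW_zero]
    rw [show fK (Multiplicative.ofAdd ((0:ZMod 2),(1:ZMod 2))) = hA ((0:ZMod 2),(1:ZMod 2),(0:ZMod 2)) from rfl, hA_conj]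
    congr 1 <;> decide
  · rw [show (kleinActD8 (Multiplicative.ofAdd ((0:ZMod 2),(1:ZMod 2)))) ((1 : DihedralGroup 4), (DihedralGroup.sr 0 : DihedralGroup 4)) = ((DihedralGroup.sr 1 : DihedralGroup 4), (1 : DihedralGroup 4)) from by decide]
    simp only [fN_apply, map_one, one_mul, mul_one, Fred_sr0, Fred_sr1, Fblack_sr0, Fblack_sr1,
      ← conjW_zero]
    rw [show fK (Multiplicative.ofAdd ((0:ZMod 2),(1:ZMod 2))) = hA ((0:ZMod 2),(1:ZMod 2),(0:ZMod 2)) from rfl, hA_conj]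
    congr 1 <;> decide
  · rw [show (kleinActD8 (Multiplicative.ofAdd ((0:ZMod 2),(1:ZMod 2)))) ((1 : DihedralGroup 4), (DihedralGroup.sr 1 : DihedralGroup 4)) = ((DihedralGroup.sr 0 : DihedralGroup 4), (1 : DihedralGroup 4)) from by decide]
    simp only [fN_apply, map_one, one_mul, mul_one, Fred_sr0, Fred_sr1, Fblack_sr0, Fblack_sr1,
      ← conjW_zero]
    rw [show fK (Multiplicative.ofAdd ((0:ZMod 2),(1:ZMod 2))) = hA ((0:ZMod 2),(1:ZMod 2),(0:ZMod 2)) from rfl, hA_conj]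
    congr 1 <;> decide
  · rw [show (kleinActD8 (Multiplicative.ofAdd ((1:ZMod 2),(0:ZMod 2)))) ((DihedralGroup.sr 0 : DihedralGroup 4), (1 : DihedralGroup 4)) = ((1 : DihedralGroup 4), (DihedralGroup.sr 0 : DihedralGroup 4)) from by decide]
    simp only [fN_apply, map_one, one_mul, mul_one, Fred_sr0, Fred_sr1, Fblack_sr0, Fblack_sr1,
      ← conjW_zero]
    rw [show fK (Multiplicative.ofAdd ((1:ZMod 2),(0:ZMod 2))) = hA ((1:ZMod 2),(0:ZMod 2),(0:ZMod 2)) from rfl, hA_conj]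
    congr 1 <;> decide
  · rw [show (kleinActD8 (Multiplicative.ofAdd ((1:ZMod 2),(0:ZMod 2)))) ((DihedralGroup.sr 1 : DihedralGroup 4), (1 : DihedralGroup 4)) = ((1 : DihedralGroup 4), (DihedralGroup.sr 1 : DihedralGroup 4)) from by decide]
    simp only [fN_apply, map_one, one_mul, mul_one, Fred_sr0, Fred_sr1, Fblack_sr0, Fblack_sr1,
      ← conjW_zero]
    rw [show fK (Multiplicative.ofAdd ((1:ZMod 2),(0:ZMod 2))) = hA ((1:ZMod 2),(0:ZMod 2),(0:ZMod 2)) from rfl, hA_conj]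
    congr 1 <;> decide
  · rw [show (kleinActD8 (Multiplicative.ofAdd ((1:ZMod 2),(0:ZMod 2)))) ((1 : DihedralGroup 4), (DihedralGroup.sr 0 : DihedralGroup 4)) = ((DihedralGroup.sr 0 : DihedralGroup 4), (1 : DihedralGroup 4)) from by decide]
    simp only [fN_apply, map_one, one_mul, mul_one, Fred_sr0, Fred_sr1, Fblack_sr0, Fblack_sr1,
      ← conjW_zero]
    rw [show fK (Multiplicative.ofAdd ((1:ZMod 2),(0:ZMod 2))) = hA ((1:ZMod 2),(0:ZMod 2),(0:ZMod 2)) from rfl, hA_conj]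
    congr 1 <;> decide
  · rw [show (kleinActD8 (Multiplicative.ofAdd ((1:ZMod 2),(0:ZMod 2)))) ((1 : DihedralGroup 4), (DihedralGroup.sr 1 : DihedralGroup 4)) = ((DihedralGroup.sr 1 : DihedralGroup 4), (1 : DihedralGroup 4)) from by decide]
    simp only [fN_apply, map_one, one_mul, mul_one, Fred_sr0, Fred_sr1, Fblack_sr0, Fblack_sr1,
      ← conjW_zero]
    rw [show fK (Multiplicative.ofAdd ((1:ZMod 2),(0:ZMod 2))) = hA ((1:ZMod 2),(0:ZMod 2),(0:ZMod 2)) from rfl, hA_conj]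
    congr 1 <;> decide
  · rw [show (kleinActD8 (Multiplicative.ofAdd ((1:ZMod 2),(1:ZMod 2)))) ((DihedralGroup.sr 0 : DihedralGroup 4), (1 : DihedralGroup 4)) = ((DihedralGroup.sr 1 : DihedralGroup 4), (1 : DihedralGroup 4)) from by decide]
    simp only [fN_apply, map_one, one_mul, mul_one, Fred_sr0, Fred_sr1, Fblack_sr0, Fblack_sr1,
      ← conjW_zero]
    rw [show fK (Multiplicative.ofAdd ((1:ZMod 2),(1:ZMod 2))) = hA ((1:ZMod 2),(1:ZMod 2),(0:ZMod 2)) from rfl, hA_conj]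
    congr 1 <;> decide
  · rw [show (kleinActD8 (Multiplicative.ofAdd ((1:ZMod 2),(1:ZMod 2)))) ((DihedralGroup.sr 1 : DihedralGroup 4), (1 : DihedralGroup 4)) = ((DihedralGroup.sr 0 : DihedralGroup 4), (1 : DihedralGroup 4)) from by decide]
    simp only [fN_apply, map_one, one_mul, mul_one, Fred_sr0, Fred_sr1, Fblack_sr0, Fblack_sr1,
      ← conjW_zero]
    rw [show fK (Multiplicative.ofAdd ((1:ZMod 2),(1:ZMod 2))) = hA ((1:ZMod 2),(1:ZMod 2),(0:ZMod 2)) from rfl, hA_conj]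
    congr 1 <;> decide
  · rw [show (kleinActD8 (Multiplicative.ofAdd ((1:ZMod 2),(1:ZMod 2)))) ((1 : DihedralGroup 4), (DihedralGroup.sr 0 : DihedralGroup 4)) = ((1 : DihedralGroup 4), (DihedralGroup.sr 1 : DihedralGroup 4)) from by decide]
    simp only [fN_apply, map_one, one_mul, mul_one, Fred_sr0, Fred_sr1, Fblack_sr0, Fblack_sr1,
      ← conjW_zero]
    rw [show fK (Multiplicative.ofAdd ((1:ZMod 2),(1:ZMod 2))) = hA ((1:ZMod 2),(1:ZMod 2),(0:ZMod 2)) from rfl, hA_conj]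
    congr 1 <;> decide
  · rw [show (kleinActD8 (Multiplicative.ofAdd ((1:ZMod 2),(1:ZMod 2)))) ((1 : DihedralGroup 4), (DihedralGroup.sr 1 : DihedralGroup 4)) = ((1 : DihedralGroup 4), (DihedralGroup.sr 0 : DihedralGroup 4)) from by decide]
    simp only [fN_apply, map_one, one_mul, mul_one, Fred_sr0, Fred_sr1, Fblack_sr0, Fblack_sr1,
      ← conjW_zero]
    rw [show fK (Multiplicative.ofAdd ((1:ZMod 2),(1:ZMod 2))) = hA ((1:ZMod 2),(1:ZMod 2),(0:ZMod 2)) from rfl, hA_conj]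
    congr 1 <;> decide

end DicePaper
namespace DicePaper
open TreeAut

/-- The lifted homomorphism from the semidirect product onto `B`. -/
def psi : (DihedralGroup 4 × DihedralGroup 4) ⋊[kleinActD8] Multiplicative (ZMod 2 × ZMod 2) →*
    TreeAut fun _ => V :=
  SemidirectProduct.lift fN fK hcompat

theorem root_inv (f : TreeAut fun _ => V) : root f⁻¹ = (root f)⁻¹ := rfl

theorem sec_inv' {f : TreeAut fun _ => V} (hf : root f = 1) (x : V) :
    sec f⁻¹ x = (sec f x)⁻¹ := by
  rw [sec_inv]
  have hx : (f 0 PUnit.unit)⁻¹ x = x := by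
    rw [show f 0 PUnit.unit = (1 : Equiv.Perm V) from hf]
    simp
  rw [hx]

/-- Elements fixing the first level whose sections vanish at all vertices of parity `q`. -/
def suppSub (q : ZMod 2) : Subgroup (TreeAut fun _ => V) where
  carrier := {f | root f = 1 ∧ ∀ x, par x = q → sec f x = 1}
  one_mem' := ⟨root_one, fun x _ => rfl⟩
  mul_mem' := by
    rintro f g ⟨hf0, hf⟩ ⟨hg0, hg⟩
    refine ⟨by rw [root_mul, hf0, hg0, one_mul], fun x hx => ?_⟩
    rw [sec_mul' _ _ _ hg0, hf x hx, hg x hx, one_mul]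
  inv_mem' := by
    rintro f ⟨hf0, hf⟩
    refine ⟨by rw [root_inv, hf0, inv_one], fun x hx => ?_⟩
    rw [sec_inv' hf0, hf x hx, inv_one]

theorem mem_suppSub {q : ZMod 2} {f : TreeAut fun _ => V} :
    f ∈ suppSub q ↔ root f = 1 ∧ ∀ x, par x = q → sec f x = 1 := Iff.rfl

theorem wAut_mem : wAut ∈ suppSub 1 := mem_suppSub.2 ⟨root_wAut, fun x hx => sec_wAut_black x hx⟩

theorem conjW_mem {k : V} (hk : par k = 0) : conjW k ∈ suppSub 1 := by
  refine mem_suppSub.2 ⟨root_conjW k, fun x hx => ?_⟩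
  rw [sec_conjW]
  exact sec_wAut_black _ (by rw [par_add, hk, hx, zero_add])

theorem conjW_mem' {k : V} (hk : par k = 1) : conjW k ∈ suppSub 0 := by
  refine mem_suppSub.2 ⟨root_conjW k, fun x hx => ?_⟩
  rw [sec_conjW]
  exact sec_wAut_black _ (by rw [par_add, hk, hx, add_zero])

theorem Fred_mem (m : DihedralGroup 4) : Fred m ∈ suppSub 1 := by
  have : ∀ g ∈ Subgroup.closure ({.sr 0, .sr 1} : Set (DihedralGroup 4)),
      Fred g ∈ suppSub 1 := by
    intro g hg
    refine Subgroup.closure_induction ?_ ?_ ?_ ?_ hg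
    · rintro y (rfl | rfl)
      · rw [Fred_sr0]; exact wAut_mem
      · rw [Fred_sr1]; exact conjW_mem (by decide)
    · rw [map_one]; exact one_mem _
    · intro u v _ _ hu hv; rw [map_mul]; exact mul_mem hu hv
    · intro u _ hu; rw [map_inv]; exact inv_mem hu
  exact this m (dihedral_genset m)

theorem Fblack_mem (n : DihedralGroup 4) : Fblack n ∈ suppSub 0 := by
  have : ∀ g ∈ Subgroup.closure ({.sr 0, .sr 1} : Set (DihedralGroup 4)),
      Fblack g ∈ suppSub 0 := by
    intro g hg
    refine Subgroup.closure_induction ?_ ?_ ?_ ?_ hg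
    · rintro y (rfl | rfl)
      · rw [Fblack_sr0]; exact conjW_mem' (by decide)
      · rw [Fblack_sr1]; exact conjW_mem' (by decide)
    · rw [map_one]; exact one_mem _
    · intro u v _ _ hu hv; rw [map_mul]; exact mul_mem hu hv
    · intro u _ hu; rw [map_inv]; exact inv_mem hu
  exact this n (dihedral_genset n)

theorem aAut_ne_one : aAut ≠ 1 := by
  intro h
  have := congrArg root h
  rw [aAut_eq, hA, root_rooted, root_one] at this
  exact absurd this (by decide)

theorem w_conjW1_ne : wAut * conjW (1,0,0) ≠ 1 := by
  intro h
  have hs := congrArg (fun f => sec f ((1,1,0) : V)) h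
  rw [sec_mul' _ _ _ (root_conjW _), sec_conjW, sw3, sec_one,
    sec_wAut_black _ (by decide), mul_one] at hs
  exact aAut_ne_one hs

theorem Fred_r2_ne : Fred (.r 2) ≠ 1 := by
  intro h
  have e : Fred (.r 2) = (wAut * conjW (1,1,0)) * (wAut * conjW (1,1,0)) := by
    show (wAut * conjW (1,1,0)) ^ (((2 : ZMod 4).val : ℤ)) = _
    rw [show (((2 : ZMod 4).val : ℤ)) = 2 from by decide, zpow_two]
  rw [e] at h
  have hz : sec (wAut * conjW (1,1,0)) (0 : V) = wAut * aAut := by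
    rw [sec_mul' _ _ _ (root_conjW _), sec_conjW, sw0,
      show ((1,1,0) : V) + 0 = ((1,1,0) : V) from by decide, sw3]
  have hs := congrArg (fun f => sec f (0 : V)) h
  rw [sec_mul' _ _ _ (root_w_conjW _), hz, sec_one, wa_sq] at hs
  exact w_conjW1_ne hs

theorem zmod4_cases : ∀ j : ZMod 4, j = 0 ∨ j = 1 ∨ j = 2 ∨ j = 3 := by decide

theorem Fred_eq_one {m : DihedralGroup 4} (h : Fred m = 1) : m = 1 := by
  match m with
  | .r j =>
    rcases zmod4_cases j with rfl | rfl | rfl | rfl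
    · rfl
    · exact absurd (by rw [show (.r 2 : DihedralGroup 4) = .r 1 * .r 1 from by decide,
        map_mul, h, one_mul]) Fred_r2_ne
    · exact absurd h Fred_r2_ne
    · exact absurd (by rw [show (.r 2 : DihedralGroup 4) = .r 3 * .r 3 from by decide,
        map_mul, h, one_mul]) Fred_r2_ne
  | .sr j =>
    exfalso
    have e1 : ∀ i : ZMod 4, (.sr (i+2) : DihedralGroup 4) = .r 1 * .sr i * (.r 1)⁻¹ := by decide
    have e2 : ∀ i : ZMod 4, (.r 2 : DihedralGroup 4) = .sr i * .sr (i+2) := by decide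
    have h2 : Fred (.sr (j+2)) = 1 := by
      rw [e1 j, map_mul, map_mul, h, mul_one, map_inv, mul_inv_cancel]
    apply Fred_r2_ne
    rw [e2 j, map_mul, h, h2, one_mul]

theorem Fblack_eq_one {n : DihedralGroup 4} (h : Fblack n = 1) : n = 1 := by
  apply Fred_eq_one
  have : aAut⁻¹ * (aAut * Fred n * aAut⁻¹) * aAut = aAut⁻¹ * 1 * aAut := by
    rw [show aAut * Fred n * aAut⁻¹ = Fblack n from rfl, h]
  simpa [mul_assoc] using this

theorem fN_eq_one {m : DihedralGroup 4 × DihedralGroup 4} (h : fN m = 1) : m = 1 := by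
  obtain ⟨m, n⟩ := m
  rw [fN_apply] at h
  obtain ⟨hr0, hr⟩ := mem_suppSub.1 (Fred_mem m)
  obtain ⟨hb0, hb⟩ := mem_suppSub.1 (Fblack_mem n)
  have hred : Fred m = 1 := by
    refine eq_one_of_sections hr0 fun x => ?_
    rcases zmod2_cases (par x) with hx | hx
    · have := congrArg (fun f => sec f x) h
      rw [sec_mul' _ _ _ hb0, hb x hx, mul_one, sec_one] at this
      exact this
    · exact hr x hx
  rw [hred, one_mul] at h
  rw [Fred_eq_one hred, Fblack_eq_one h]
  rfl

theorem psi_injective : Function.Injective psi := by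
  rw [injective_iff_map_eq_one psi]
  intro x hx
  rw [← SemidirectProduct.inl_left_mul_inr_right x, map_mul] at hx
  rw [show psi (SemidirectProduct.inl x.left) = fN x.left from SemidirectProduct.lift_inl _ _ _ _,
    show psi (SemidirectProduct.inr x.right) = fK x.right from SemidirectProduct.lift_inr _ _ _ _]
    at hx
  -- the root of fN x.left is trivial, so the root of fK x.right must be trivial
  have hN0 : root (fN x.left) = 1 := by
    obtain ⟨m, n⟩ := x.left
    rw [fN_apply, root_mul, (mem_suppSub.1 (Fred_mem m)).1, (mem_suppSub.1 (Fblack_mem n)).1,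
      one_mul]
  have hroot := congrArg root hx
  rw [root_mul, hN0, one_mul, root_one] at hroot
  have hK : x.right = 1 := by
    have ht : ((Multiplicative.toAdd x.right).1, (Multiplicative.toAdd x.right).2, (0:ZMod 2))
        = (0 : V) := by
      have h0 := congrArg (fun σ => σ (0 : V)) hroot
      have e : root (fK x.right) (0 : V)
          = ((Multiplicative.toAdd x.right).1, (Multiplicative.toAdd x.right).2, (0:ZMod 2))
            + 0 := rfl
      simp only [e] at h0
      rw [add_zero] at h0
      simpa using h0
    have e1 : (Multiplicative.toAdd x.right).1 = 0 := congrArg Prod.fst ht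
    have e2 : (Multiplicative.toAdd x.right).2 = 0 := congrArg (fun v => v.2.1) ht
    have h1 : (Multiplicative.toAdd x.right) = 0 := Prod.ext e1 e2
    exact h1
  rw [hK, map_one, mul_one] at hx
  have := fN_eq_one hx
  rw [← SemidirectProduct.inl_left_mul_inr_right x, this, hK, map_one, map_one, one_mul]

end DicePaper
namespace DicePaper
open TreeAut

abbrev GG := (DihedralGroup 4 × DihedralGroup 4) ⋊[kleinActD8] Multiplicative (ZMod 2 × ZMod 2)

def gw : GG := SemidirectProduct.inl ((.sr 0 : DihedralGroup 4), (1 : DihedralGroup 4))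
def ga : GG := SemidirectProduct.inr (Multiplicative.ofAdd ((1 : ZMod 2), (0 : ZMod 2)))
def gb : GG := SemidirectProduct.inr (Multiplicative.ofAdd ((0 : ZMod 2), (1 : ZMod 2)))

theorem psi_gw : psi gw = wAut := by
  rw [gw, psi, SemidirectProduct.lift_inl, fN_apply, Fred_sr0, map_one, mul_one]

theorem psi_ga : psi ga = aAut := by
  rw [ga, psi, SemidirectProduct.lift_inr, fK_a, aAut_eq]

theorem psi_gb : psi gb = bAut := by
  rw [gb, psi, SemidirectProduct.lift_inr, fK_b, bAut_eq]

theorem closure_top : Subgroup.closure ({ga, gb, gw} : Set GG) = ⊤ := by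
  set C := Subgroup.closure ({ga, gb, gw} : Set GG) with hC
  have hga : ga ∈ C := Subgroup.subset_closure (by simp)
  have hgb : gb ∈ C := Subgroup.subset_closure (by simp)
  have hgw : gw ∈ C := Subgroup.subset_closure (by simp)
  have hinr : ∀ k : Multiplicative (ZMod 2 × ZMod 2), SemidirectProduct.inr k ∈ C := by
    intro k
    have hk : k = Multiplicative.ofAdd ((Multiplicative.toAdd k).1, (Multiplicative.toAdd k).2) :=
      rfl
    rcases zmod2_cases (Multiplicative.toAdd k).1 with h1 | h1 <;>
      rcases zmod2_cases (Multiplicative.toAdd k).2 with h2 | h2 <;> rw [hk, h1, h2]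
    · rw [show Multiplicative.ofAdd ((0:ZMod 2),(0:ZMod 2)) = (1 : Multiplicative (ZMod 2 × ZMod 2))
        from rfl, map_one]
      exact one_mem _
    · exact hgb
    · exact hga
    · rw [show Multiplicative.ofAdd ((1:ZMod 2),(1:ZMod 2))
          = Multiplicative.ofAdd ((1:ZMod 2),(0:ZMod 2)) * Multiplicative.ofAdd ((0:ZMod 2),(1:ZMod 2))
        from by decide, map_mul]
      exact mul_mem hga hgb
  have hconj : ∀ (k : Multiplicative (ZMod 2 × ZMod 2)) (n : DihedralGroup 4 × DihedralGroup 4),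
      SemidirectProduct.inl n ∈ C → SemidirectProduct.inl ((kleinActD8 k) n) ∈ C := by
    intro k n hn
    rw [SemidirectProduct.inl_aut, map_inv]
    exact mul_mem (mul_mem (hinr k) hn) (inv_mem (hinr k))
  have h10 : SemidirectProduct.inl (((.sr 1 : DihedralGroup 4), (1 : DihedralGroup 4))) ∈ C := by
    have := hconj (Multiplicative.ofAdd ((1:ZMod 2),(1:ZMod 2))) _ hgw
    rwa [show (kleinActD8 (Multiplicative.ofAdd ((1:ZMod 2),(1:ZMod 2))))
        ((.sr 0 : DihedralGroup 4), (1 : DihedralGroup 4))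
        = ((.sr 1 : DihedralGroup 4), (1 : DihedralGroup 4)) from by decide] at this
  have h01 : SemidirectProduct.inl (((1 : DihedralGroup 4), (.sr 0 : DihedralGroup 4))) ∈ C := by
    have := hconj (Multiplicative.ofAdd ((1:ZMod 2),(0:ZMod 2))) _ hgw
    rwa [show (kleinActD8 (Multiplicative.ofAdd ((1:ZMod 2),(0:ZMod 2))))
        ((.sr 0 : DihedralGroup 4), (1 : DihedralGroup 4))
        = ((1 : DihedralGroup 4), (.sr 0 : DihedralGroup 4)) from by decide] at this
  have h11 : SemidirectProduct.inl (((1 : DihedralGroup 4), (.sr 1 : DihedralGroup 4))) ∈ C := by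
    have := hconj (Multiplicative.ofAdd ((0:ZMod 2),(1:ZMod 2))) _ hgw
    rwa [show (kleinActD8 (Multiplicative.ofAdd ((0:ZMod 2),(1:ZMod 2))))
        ((.sr 0 : DihedralGroup 4), (1 : DihedralGroup 4))
        = ((1 : DihedralGroup 4), (.sr 1 : DihedralGroup 4)) from by decide] at this
  have hL : ∀ m : DihedralGroup 4,
      SemidirectProduct.inl ((m, (1 : DihedralGroup 4))) ∈ C := by
    intro m
    have hle : Subgroup.closure ({.sr 0, .sr 1} : Set (DihedralGroup 4)) ≤
        Subgroup.comap (SemidirectProduct.inl.comp (MonoidHom.inl (DihedralGroup 4) (DihedralGroup 4))) C := by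
      rw [Subgroup.closure_le]
      rintro y (rfl | rfl)
      · exact hgw
      · exact h10
    exact hle (dihedral_genset m)
  have hR : ∀ n : DihedralGroup 4,
      SemidirectProduct.inl (((1 : DihedralGroup 4), n)) ∈ C := by
    intro n
    have hle : Subgroup.closure ({.sr 0, .sr 1} : Set (DihedralGroup 4)) ≤
        Subgroup.comap (SemidirectProduct.inl.comp (MonoidHom.inr (DihedralGroup 4) (DihedralGroup 4))) C := by
      rw [Subgroup.closure_le]
      rintro y (rfl | rfl)
      · exact h01
      · exact h11
    exact hle (dihedral_genset n)
  have hinl : ∀ n : DihedralGroup 4 × DihedralGroup 4, SemidirectProduct.inl n ∈ C := by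
    rintro ⟨m, n⟩
    have : ((m, n) : DihedralGroup 4 × DihedralGroup 4) = (m, 1) * (1, n) := by
      rw [Prod.mk_mul_mk, mul_one, one_mul]
    rw [this, map_mul]
    exact mul_mem (hL m) (hR n)
  refine top_le_iff.1 fun x _ => ?_
  rw [← SemidirectProduct.inl_left_mul_inr_right x]
  exact mul_mem (hinl x.left) (hinr x.right)

theorem range_eq : psi.range = Subgroup.closure {aAut, bAut, wAut} := by
  rw [MonoidHom.range_eq_map, ← closure_top, MonoidHom.map_closure]
  congr 1
  rw [show ({ga, gb, gw} : Set GG) = insert ga (insert gb {gw}) from rfl,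
    Set.image_insert_eq, Set.image_insert_eq, Set.image_singleton, psi_ga, psi_gb, psi_gw]

def cardEquiv : GG ≃ (DihedralGroup 4 × DihedralGroup 4) × Multiplicative (ZMod 2 × ZMod 2) where
  toFun x := (x.left, x.right)
  invFun p := ⟨p.1, p.2⟩
  left_inv x := rfl
  right_inv p := rfl

theorem card_GG : Nat.card GG = 256 := by
  rw [Nat.card_congr cardEquiv, Nat.card_prod, Nat.card_prod,
    Nat.card_eq_fintype_card, Nat.card_eq_fintype_card,
    show Fintype.card (DihedralGroup 4) = 8 from by decide,
    show Fintype.card (Multiplicative (ZMod 2 × ZMod 2)) = 4 from by decide]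

end DicePaper

open DicePaper in
/-- `B = ⟨a, b, w⟩` is isomorphic to `(C2 × C2) ⋉ (D₈ × D₈)`, where the
first generator of `C2 × C2` swaps the two dihedral factors and the second swaps them
while exchanging the two generating involutions of each; in particular `|B| = 256`. -/
theorem stmt5 :
    Nonempty ((Subgroup.closure {aAut, bAut, wAut} : Subgroup (TreeAut fun _ => V)) ≃*
      (DihedralGroup 4 × DihedralGroup 4) ⋊[kleinActD8] Multiplicative (ZMod 2 × ZMod 2)) ∧
    Nat.card (Subgroup.closure {aAut, bAut, wAut} : Subgroup (TreeAut fun _ => V)) = 256 := by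
  have iso : (Subgroup.closure {aAut, bAut, wAut} : Subgroup (TreeAut fun _ => V)) ≃* GG :=
    (MulEquiv.subgroupCongr range_eq.symm).trans (MonoidHom.ofInjective psi_injective).symm
  refine ⟨⟨iso⟩, ?_⟩
  rw [Nat.card_congr iso.toEquiv, card_GG]
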